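/- The language { aⁿbⁿ | n ≥ 1 } is generated by some 1-D cellular automaton of radius 1 over alphabet {a, b, ⊥} from a regular set of initial configurations (namely the single word ab, padded by ⊥), even though this language is not regular. -/

import Mathlib

/-!
Under the rule in which `a` and `b` never change, while `⊥` turns into `a` when its right
neighbour is `a` and into `b` when its left neighbour is `b`, the block of `a`s grows by one cell
to the left and the block of `b`s by one cell to the right at every step, so the `n`-th
configuration is `aⁿ⁺¹bⁿ⁺¹` (shifted by `n`). Non-regularity is the pigeonhole argument: a DFA
reaches the same state after two different words `aᵐ⁺¹` and `aⁿ⁺¹`, hence accepts `aᵐ⁺¹bⁿ⁺¹`.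
-/

/-- Global map of a 1-D cellular automaton of radius `r` with local rule `f`. -/
def glob {α : Type*} (r : ℕ) (f : (Fin (2 * r + 1) → α) → α) (c : ℤ → α) : ℤ → α :=
  fun z => f (fun j => c (z + (j.val : ℤ) - (r : ℤ)))

/-- The finite configuration `⊥^ω w ⊥^ω`, with `w` placed at positions `0, …, |w| - 1`. -/
def padW {α : Type*} (bot : α) (w : List α) : ℤ → α :=
  fun z => if 0 ≤ z ∧ z < (w.length : ℤ) then w.getD z.toNat bot else bot

/-- The alphabet `{a, b, ⊥}`. -/
inductive AB : Type
  | a : AB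
  | b : AB
  | bot : AB
deriving DecidableEq

instance instFintypeAB : Fintype AB :=
  ⟨{AB.a, AB.b, AB.bot}, fun x => by cases x <;> simp⟩

theorem List.replicate_append_replicate_inj {α : Type*} {a b : α} (hab : a ≠ b) {m n m' n' : ℕ} :
    replicate m a ++ replicate n b = replicate m' a ++ replicate n' b ↔ m = m' ∧ n = n' := by
  classical
  refine ⟨fun h => ⟨?_, ?_⟩, fun ⟨hm, hn⟩ => hm ▸ hn ▸ rfl⟩
  · simpa [count_replicate, hab, hab.symm] using congrArg (count a) h
  · simpa [count_replicate, hab, hab.symm] using congrArg (count b) h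

theorem DFA.not_forall_mem_accepts_iff_replicate_append_replicate {α σ : Type*} [Finite σ]
    {a b : α} (hab : a ≠ b) (M : DFA α σ) :
    ¬ ∀ w, w ∈ M.accepts ↔ ∃ n, 1 ≤ n ∧ w = List.replicate n a ++ List.replicate n b := by
  intro hM
  obtain ⟨m, n, hmn, heq⟩ :=
    Finite.exists_ne_map_eq_of_infinite fun k : ℕ => M.eval (List.replicate (k + 1) a)
  have hacc : List.replicate (m + 1) a ++ List.replicate (n + 1) b ∈ M.accepts := by
    have hn := (hM _).mpr ⟨n + 1, by omega, rfl⟩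
    rw [mem_accepts, eval, evalFrom_of_append] at hn ⊢
    rwa [← eval, heq]
  obtain ⟨k, -, hk⟩ := (hM _).mp hacc
  obtain ⟨hm, hn⟩ := (List.replicate_append_replicate_inj hab).mp hk
  exact hmn (by omega)

section padW

variable {α : Type*} {bot : α}

lemma padW_replicate_append_replicate (a b : α) (m n : ℕ) (z : ℤ) :
    padW bot (List.replicate m a ++ List.replicate n b) z =
      if 0 ≤ z ∧ z < m then a else if m ≤ z ∧ z < m + n then b else bot := by
  unfold padW
  simp only [List.length_append, List.length_replicate]
  push_cast
  split_ifs
  · rw [List.getD_append _ _ _ _ (by simp; omega), List.getD_replicate _ (by omega)]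
  · rw [List.getD_append_right _ _ _ _ (by rw [List.length_replicate]; omega),
      List.length_replicate, List.getD_replicate _ (by omega)]
  all_goals first | rfl | omega

lemma padW_ne_bot_iff {w : List α} (hw : bot ∉ w) {z : ℤ} :
    padW bot w z ≠ bot ↔ 0 ≤ z ∧ z < w.length := by
  unfold padW
  split_ifs with h
  · have hlt : z.toNat < w.length := by omega
    rw [List.getD_eq_getElem _ _ hlt]
    exact ⟨fun _ => h, fun _ hc => hw (hc ▸ List.getElem_mem hlt)⟩
  · simp [h]

lemma List.eq_of_padW_eq_shift {w u : List α} (hw : bot ∉ w) (hu : bot ∉ u) (d : ℤ)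
    (h : ∀ z, padW bot w z = padW bot u (z + d)) : w = u := by
  have hsupp (z : ℤ) : (0 ≤ z ∧ z < w.length) ↔ (0 ≤ z + d ∧ z + d < u.length) := by
    rw [← padW_ne_bot_iff hw, ← padW_ne_bot_iff hu, h z]
  have hlen : w.length = u.length := by
    have h1 := hsupp (w.length - 1)
    have h2 := hsupp (u.length - 1 - d)
    have h3 := hsupp 0
    have h4 := hsupp (-d)
    omega
  refine List.ext_getElem hlen fun i hiw hiu => ?_
  have hd : d = 0 := by
    have h1 := hsupp 0
    have h2 := hsupp (-d)
    omega
  have hi := h i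
  simp only [padW, hd, add_zero, Nat.cast_lt, hiw, hiu, Nat.cast_nonneg, and_self, if_true,
    Int.toNat_natCast, List.getD_eq_getElem _ _ hiw, List.getD_eq_getElem _ _ hiu] at hi
  exact hi

end padW

def abRule : AB → AB → AB → AB
  | _, .a, _ => .a
  | _, .b, _ => .b
  | l, .bot, r => if r = .a then .a else if l = .b then .b else .bot

def abCA : (Fin (2 * 1 + 1) → AB) → AB := fun g => abRule (g 0) (g 1) (g 2)

def abConf (n : ℕ) : ℤ → AB := fun z =>
  if -(n : ℤ) ≤ z ∧ z ≤ 0 then .a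
  else if 1 ≤ z ∧ z ≤ (n : ℤ) + 1 then .b
  else .bot

lemma glob_abCA_abConf (n : ℕ) : glob 1 abCA (abConf n) = abConf (n + 1) := by
  funext z
  show abRule (abConf n (z + 0 - 1)) (abConf n (z + 1 - 1)) (abConf n (z + 2 - 1)) = _
  simp only [abConf]
  push_cast
  split_ifs <;> first | rfl | omega

lemma abConf_eq_padW (n : ℕ) :
    abConf n =
      fun z => padW .bot (List.replicate (n + 1) .a ++ List.replicate (n + 1) .b) (z + n) := by
  funext z
  rw [padW_replicate_append_replicate]
  simp only [abConf]
  push_cast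
  split_ifs <;> first | rfl | omega

lemma iterate_glob_abCA (n : ℕ) :
    (glob 1 abCA)^[n] (padW .bot [.a, .b]) =
      fun z => padW .bot (List.replicate (n + 1) .a ++ List.replicate (n + 1) .b) (z + n) := by
  rw [← abConf_eq_padW]
  induction n with
  | zero => simpa using (abConf_eq_padW 0).symm
  | succ n ih => rw [Function.iterate_succ_apply', ih, glob_abCA_abConf]

/-- The language `{aⁿbⁿ | n ≥ 1}` is generated by some radius-1 CA over `{a, b, ⊥}`
from the initial configuration `⊥^ω a b ⊥^ω` (with `a` at position 0 and `b` at position 1),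
even though this language is not regular (no DFA with finitely many states recognizes it). -/
theorem stmt7 :
    (∃ f : (Fin (2 * 1 + 1) → AB) → AB,
      f (fun _ => AB.bot) = AB.bot ∧
      { w : List AB | AB.bot ∉ w ∧
          ∃ (n : ℕ) (s : ℤ), ∀ z : ℤ,
            (glob 1 f)^[n] (padW AB.bot [AB.a, AB.b]) z = padW AB.bot w (z - s) }
        = { w : List AB | ∃ n : ℕ, 1 ≤ n ∧
            w = List.replicate n AB.a ++ List.replicate n AB.b }) ∧
    ¬ ∃ (Q : Type) (_ : Finite Q) (M : DFA AB Q),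
        ∀ w : List AB, w ∈ M.accepts ↔
          ∃ n : ℕ, 1 ≤ n ∧ w = List.replicate n AB.a ++ List.replicate n AB.b := by
  refine ⟨⟨abCA, rfl, Set.ext fun w => ⟨?_, ?_⟩⟩, ?_⟩
  · rintro ⟨hw, n, s, h⟩
    refine ⟨n + 1, n.succ_pos, List.eq_of_padW_eq_shift hw (by simp) (s + n) fun z => ?_⟩
    simpa [iterate_glob_abCA, add_assoc] using (h (z + s)).symm
  · rintro ⟨_ | n, hn, rfl⟩
    · omega
    refine ⟨by simp, n, -n, fun z => ?_⟩
    simp [iterate_glob_abCA]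
  · rintro ⟨Q, _, M, hM⟩
    exact M.not_forall_mem_accepts_iff_replicate_append_replicate (by decide) hM
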